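/- The map (J1,J2,J3,x1,x2,x3) ↦ (J1 - 2c2 x3, J2, J3 + 2c2 x1, x1, x2, x3) is a Poisson map for the e(3) Lie-Poisson bracket, and under this substitution the Hamiltonian H = J1^2+J2^2+4J3^2 - 2a1 J3 - 4c1 x2 + 4c2(J1 x3 - 2J3 x1) becomes, modulo addition of multiples of the Casimirs x1^2+x2^2+x3^2 and J1 x1+J2 x2+J3 x3 and constants, the function J1^2+J2^2+4J3^2 - 2a1 J3 - 4c1 x2 - 4a1 c2 x1 + 8c2 J3 x1 - 4c2^2 x3^2. -/

import Mathlib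

/-!
Linear functions `⟨u, J⟩ + ⟨w, x⟩` on `e(3)*` are the elements `(u, w)` of the Lie algebra
`e(3) = so(3) ⋉ ℝ³`, and on them the Lie–Poisson bracket is the Lie bracket
`[(u, w), (u', w')] = (u × u', u × w' + w × u')`. The substitution `J ↦ J + a × x` is dual to
`T (u, w) = (u, w + u × a)`, which is a Lie algebra endomorphism by the Jacobi identity for `×`.
As the bracket is a biderivation, preserving it on the coordinate functions suffices; the map of
the theorem is the case `a = (0, -2c₂, 0)`. The Hamiltonian identity holds exactly, with no
Casimir or constant correction.
-/

open MvPolynomial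

noncomputable section

def eps (i j k : Fin 3) : ℝ :=
  if (i = 0 ∧ j = 1 ∧ k = 2) ∨ (i = 1 ∧ j = 2 ∧ k = 0) ∨ (i = 2 ∧ j = 0 ∧ k = 1) then 1
  else if (i = 0 ∧ j = 2 ∧ k = 1) ∨ (i = 2 ∧ j = 1 ∧ k = 0) ∨ (i = 1 ∧ j = 0 ∧ k = 2) then -1
  else 0

/-- The coordinate `J_i` on `ℝ^6 = {(J₁,J₂,J₃,x₁,x₂,x₃)}` as a polynomial. -/
def Jv (i : Fin 3) : MvPolynomial (Fin 6) ℝ := X (Fin.castAdd 3 i)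

def xv (i : Fin 3) : MvPolynomial (Fin 6) ℝ := X (Fin.natAdd 3 i)

def e3Bracket (f g : MvPolynomial (Fin 6) ℝ) : MvPolynomial (Fin 6) ℝ :=
  ∑ i : Fin 3, ∑ j : Fin 3, ∑ k : Fin 3, C (eps i j k) *
    (Jv k * pderiv (Fin.castAdd 3 i) f * pderiv (Fin.castAdd 3 j) g
     + xv k * pderiv (Fin.castAdd 3 i) f * pderiv (Fin.natAdd 3 j) g
     + xv k * pderiv (Fin.natAdd 3 i) f * pderiv (Fin.castAdd 3 j) g)

open scoped Matrix

lemma eps_swap (i j k : Fin 3) : eps j i k = -eps i j k := by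
  fin_cases i <;> fin_cases j <;> fin_cases k <;> simp [eps]

lemma e3Bracket_skew (f g : MvPolynomial (Fin 6) ℝ) : e3Bracket g f = -e3Bracket f g := by
  rw [e3Bracket, Finset.sum_comm, e3Bracket, ← Finset.sum_neg_distrib]
  refine Finset.sum_congr rfl fun i _ => ?_
  rw [← Finset.sum_neg_distrib]
  refine Finset.sum_congr rfl fun j _ => ?_
  rw [← Finset.sum_neg_distrib]
  refine Finset.sum_congr rfl fun k _ => ?_
  rw [eps_swap, map_neg]
  ring

lemma e3Bracket_add_right (f g g' : MvPolynomial (Fin 6) ℝ) :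
    e3Bracket f (g + g') = e3Bracket f g + e3Bracket f g' := by
  simp only [e3Bracket, ← Finset.sum_add_distrib, map_add]
  refine Finset.sum_congr rfl fun i _ => Finset.sum_congr rfl fun j _ =>
    Finset.sum_congr rfl fun k _ => ?_
  ring

lemma e3Bracket_mul_right (f g g' : MvPolynomial (Fin 6) ℝ) :
    e3Bracket f (g * g') = g * e3Bracket f g' + g' * e3Bracket f g := by
  simp only [e3Bracket, Finset.mul_sum, ← Finset.sum_add_distrib, Derivation.leibniz, smul_eq_mul]
  refine Finset.sum_congr rfl fun i _ => Finset.sum_congr rfl fun j _ =>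
    Finset.sum_congr rfl fun k _ => ?_
  ring

lemma e3Bracket_C_right (f : MvPolynomial (Fin 6) ℝ) (a : ℝ) : e3Bracket f (C a) = 0 := by
  simp [e3Bracket]

theorem e3Bracket_map_of_forall_X (φ : MvPolynomial (Fin 6) ℝ →ₐ[ℝ] MvPolynomial (Fin 6) ℝ)
    (h : ∀ m n, e3Bracket (φ (X m)) (φ (X n)) = φ (e3Bracket (X m) (X n)))
    (f g : MvPolynomial (Fin 6) ℝ) : e3Bracket (φ f) (φ g) = φ (e3Bracket f g) := by
  have extend : ∀ f₀, (∀ n, e3Bracket (φ f₀) (φ (X n)) = φ (e3Bracket f₀ (X n))) →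
      ∀ g, e3Bracket (φ f₀) (φ g) = φ (e3Bracket f₀ g) := by
    intro f₀ hf₀ g
    induction g using MvPolynomial.induction_on with
    | C a => rw [e3Bracket_C_right, map_zero, algHom_C, algebraMap_eq, e3Bracket_C_right]
    | add p q hp hq => simp only [map_add, e3Bracket_add_right, hp, hq]
    | mul_X p n hp => simp only [map_mul, e3Bracket_mul_right, hp, hf₀, map_add]
  -- by skew-symmetry, `extend` at `f₀ = X n` gives its own hypothesis for arbitrary `f₀`
  refine extend f (fun n => ?_) g
  rw [e3Bracket_skew, extend (X n) (h n) f, ← map_neg, ← e3Bracket_skew]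

/-- The linear function on `e(3)*` given by `p = (u, w) ∈ e(3)`. -/
def linearForm (p : (Fin 3 → ℝ) × (Fin 3 → ℝ)) : MvPolynomial (Fin 6) ℝ :=
  ∑ i, C (p.1 i) * Jv i + ∑ i, C (p.2 i) * xv i

def e3LieBracket (p q : (Fin 3 → ℝ) × (Fin 3 → ℝ)) : (Fin 3 → ℝ) × (Fin 3 → ℝ) :=
  (p.1 ⨯₃ q.1, p.1 ⨯₃ q.2 + p.2 ⨯₃ q.1)

lemma pderiv_castAdd_linearForm (p : (Fin 3 → ℝ) × (Fin 3 → ℝ)) (i : Fin 3) :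
    pderiv (Fin.castAdd 3 i) (linearForm p) = C (p.1 i) := by
  fin_cases i <;> simp [linearForm, Jv, xv, pderiv_X, Fin.sum_univ_three]

lemma pderiv_natAdd_linearForm (p : (Fin 3 → ℝ) × (Fin 3 → ℝ)) (i : Fin 3) :
    pderiv (Fin.natAdd 3 i) (linearForm p) = C (p.2 i) := by
  fin_cases i <;> simp [linearForm, Jv, xv, pderiv_X, Fin.sum_univ_three]

lemma e3Bracket_linearForm (p q : (Fin 3 → ℝ) × (Fin 3 → ℝ)) :
    e3Bracket (linearForm p) (linearForm q) = linearForm (e3LieBracket p q) := by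
  simp only [e3Bracket, pderiv_castAdd_linearForm, pderiv_natAdd_linearForm]
  simp only [linearForm, e3LieBracket, cross_apply, Fin.sum_univ_three, eps, Fin.isValue,
    Fin.reduceEq, and_false, and_true, or_self, or_false, or_true, ↓reduceIte, C_0, C_1,
    C_neg, C_sub, C_mul, C_add, Matrix.cons_val_zero, Matrix.cons_val_one, Matrix.cons_val,
    Pi.add_apply]
  ring

lemma exists_linearForm_eq_X (m : Fin 6) : ∃ p, linearForm p = X m := by
  induction m using Fin.addCases (m := 3) (n := 3) with
  | left i => exact ⟨(Pi.single i 1, 0), by simp [linearForm, Jv, Pi.single_apply]⟩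
  | right i => exact ⟨(0, Pi.single i 1), by simp [linearForm, xv, Pi.single_apply]⟩

/-- The substitution `J ↦ J + a × x`, `x ↦ x`: note `(a × x)_i = ⟨x, e_i × a⟩`. -/
def e3Shift (a : Fin 3 → ℝ) : MvPolynomial (Fin 6) ℝ →ₐ[ℝ] MvPolynomial (Fin 6) ℝ :=
  aeval (Fin.append (fun i => linearForm (Pi.single i 1, Pi.single i 1 ⨯₃ a)) xv)

def e3ShiftLie (a : Fin 3 → ℝ) (p : (Fin 3 → ℝ) × (Fin 3 → ℝ)) : (Fin 3 → ℝ) × (Fin 3 → ℝ) :=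
  (p.1, p.2 + p.1 ⨯₃ a)

lemma e3Shift_Jv (a : Fin 3 → ℝ) (i : Fin 3) :
    e3Shift a (Jv i) = linearForm (Pi.single i 1, Pi.single i 1 ⨯₃ a) := by
  rw [e3Shift, Jv, aeval_X, Fin.append_left]

lemma e3Shift_xv (a : Fin 3 → ℝ) (i : Fin 3) : e3Shift a (xv i) = xv i := by
  rw [e3Shift, xv, aeval_X, Fin.append_right, xv]

lemma e3Shift_linearForm (a : Fin 3 → ℝ) (p : (Fin 3 → ℝ) × (Fin 3 → ℝ)) :
    e3Shift a (linearForm p) = linearForm (e3ShiftLie a p) := by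
  conv_lhs => rw [linearForm]
  simp only [map_add, map_sum, map_mul, algHom_C, e3Shift_Jv, e3Shift_xv]
  simp only [e3ShiftLie, linearForm, algebraMap_eq, Pi.single_apply,
    MonoidWithZeroHom.map_ite_one_zero, ite_mul, one_mul, zero_mul, Finset.sum_ite_eq',
    Finset.mem_univ, ↓reduceIte, cross_apply,
    Fin.isValue, Fin.sum_univ_three, Matrix.cons_val_zero, Matrix.cons_val_one, Matrix.cons_val,
    Fin.reduceEq, Pi.add_apply, C_0, C_add, C_sub, C_mul]
  ring

lemma e3LieBracket_e3ShiftLie (a : Fin 3 → ℝ) (p q : (Fin 3 → ℝ) × (Fin 3 → ℝ)) :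
    e3LieBracket (e3ShiftLie a p) (e3ShiftLie a q) = e3ShiftLie a (e3LieBracket p q) := by
  simp only [e3LieBracket, e3ShiftLie, map_add, LinearMap.add_apply, leibniz_cross p.1 q.1 a,
    ← cross_anticomm q.1 (p.1 ⨯₃ a), Prod.mk.injEq, true_and]
  abel

theorem e3Bracket_e3Shift (a : Fin 3 → ℝ) (f g : MvPolynomial (Fin 6) ℝ) :
    e3Bracket (e3Shift a f) (e3Shift a g) = e3Shift a (e3Bracket f g) := by
  refine e3Bracket_map_of_forall_X _ (fun m n => ?_) f g
  obtain ⟨p, hp⟩ := exists_linearForm_eq_X m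
  obtain ⟨q, hq⟩ := exists_linearForm_eq_X n
  rw [← hp, ← hq, e3Shift_linearForm, e3Shift_linearForm, e3Bracket_linearForm,
    e3Bracket_linearForm, e3Shift_linearForm, e3LieBracket_e3ShiftLie]

lemma e3Shift_eq_aeval (c2 : ℝ) :
    e3Shift ![0, -2 * c2, 0] =
      aeval ![X 0 - 2 * C c2 * X 5, X 1, X 2 + 2 * C c2 * X 3, X 3, X 4, X 5] := by
  refine algHom_ext fun m => ?_
  induction m using Fin.addCases (m := 3) (n := 3) with
  | left i =>
    rw [← Jv, e3Shift_Jv]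
    fin_cases i <;> simp [linearForm, Jv, xv, cross_apply, Fin.sum_univ_three, map_ofNat C 2]
    ring
  | right i => rw [← xv, e3Shift_xv]; fin_cases i <;> simp [xv]

/-- the map `(J,x) ↦ (J₁ - 2c₂x₃, J₂, J₃ + 2c₂x₁, x₁, x₂, x₃)` is a Poisson
map for the `e(3)` bracket, and it carries the Hamiltonian
`H = J₁²+J₂²+4J₃² - 2a₁J₃ - 4c₁x₂ + 4c₂(J₁x₃ - 2J₃x₁)`, modulo real multiples of the
Casimirs `x₁²+x₂²+x₃²` and `J₁x₁+J₂x₂+J₃x₃` and an additive constant, to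
`J₁²+J₂²+4J₃² - 2a₁J₃ - 4c₁x₂ - 4a₁c₂x₁ + 8c₂J₃x₁ - 4c₂²x₃²`. -/
theorem gc_shift_poisson_and_hamiltonian (a1 c1 c2 : ℝ) :
    (∀ f g : MvPolynomial (Fin 6) ℝ,
      e3Bracket
        (aeval ![X 0 - 2 * C c2 * X 5, X 1, X 2 + 2 * C c2 * X 3, X 3, X 4, X 5] f)
        (aeval ![X 0 - 2 * C c2 * X 5, X 1, X 2 + 2 * C c2 * X 3, X 3, X 4, X 5] g)
      = aeval ![X 0 - 2 * C c2 * X 5, X 1, X 2 + 2 * C c2 * X 3, X 3, X 4, X 5]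
          (e3Bracket f g)) ∧
    (∃ α β γ : ℝ,
      aeval ![X 0 - 2 * C c2 * X 5, X 1, X 2 + 2 * C c2 * X 3, X 3, X 4, X 5]
        (Jv 0 ^ 2 + Jv 1 ^ 2 + 4 * Jv 2 ^ 2 - 2 * C a1 * Jv 2 - 4 * C c1 * xv 1
          + 4 * C c2 * (Jv 0 * xv 2 - 2 * Jv 2 * xv 0))
      - (Jv 0 ^ 2 + Jv 1 ^ 2 + 4 * Jv 2 ^ 2 - 2 * C a1 * Jv 2 - 4 * C c1 * xv 1
          - 4 * C a1 * C c2 * xv 0 + 8 * C c2 * Jv 2 * xv 0 - 4 * C c2 ^ 2 * xv 2 ^ 2)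
      = C α * (xv 0 ^ 2 + xv 1 ^ 2 + xv 2 ^ 2)
        + C β * (Jv 0 * xv 0 + Jv 1 * xv 1 + Jv 2 * xv 2) + C γ) := by
  refine ⟨fun f g => ?_, 0, 0, 0, ?_⟩
  · rw [← e3Shift_eq_aeval]
    exact e3Bracket_e3Shift _ f g
  · simp only [Jv, xv, Fin.reduceCastAdd, Fin.natAdd_eq_addNat, Fin.reduceAddNat, map_add, map_sub,
      map_mul, map_pow, map_ofNat, aeval_X, aeval_C, algebraMap_eq, Matrix.cons_val, C_0]
    ring

end
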